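/- arXiv:1702.07830 — 4 statements merged into one kernel-verified Lean document; each statement's English description precedes it below -/
import Mathlib

section
/- Let δ be a real number with 0 < δ < √2 − 1. There exist constants C₁, C₂ > 0 depending only on δ with the following property: for any M, K, s ∈ ℕ with s ≥ 1, any matrix Ψ ∈ ℝ^{M×K} whose restricted isometry constant δ_{2s} satisfies δ_{2s} ≤ δ, any vector c̄ ∈ ℝ^K, any ε ≥ 0 and any noise vector e ∈ ℝ^M with ‖e‖₂ ≤ ε, if y = Ψc̄ + e and c is any minimizer of ‖c‖₁ over the set {c ∈ ℝ^K : ‖Ψc − y‖₂ ≤ ε}, then ‖c − c̄‖₂ ≤ C₁‖c̄ − c̄*‖₁/√s + C₂ε, where c̄* is the vector c̄ with all but its s largest-magnitude entries set to zero. -/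
open Finset

/-- Squared Euclidean (ℓ₂) norm. -/
noncomputable def l2sq {n : Type*} [Fintype n] (x : n → ℝ) : ℝ := ∑ i, (x i) ^ 2

/-- Euclidean (ℓ₂) norm. -/
noncomputable def l2 {n : Type*} [Fintype n] (x : n → ℝ) : ℝ := Real.sqrt (∑ i, (x i) ^ 2)

/-- ℓ₁ norm. -/
noncomputable def l1 {n : Type*} [Fintype n] (x : n → ℝ) : ℝ := ∑ i, |x i|

/-- ℓ₀ "norm": number of nonzero entries. -/
noncomputable def l0 {n : Type*} [Fintype n] (x : n → ℝ) : ℕ := Set.ncard {i | x i ≠ 0}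

/-- `cstar` is `c` with all but its `s` largest-magnitude entries set to zero. -/
def IsBestSTerm {K : ℕ} (s : ℕ) (c cstar : Fin K → ℝ) : Prop :=
  ∃ S : Finset (Fin K), S.card = min s K ∧
    (∀ i, cstar i = if i ∈ S then c i else 0) ∧
    ∀ i ∈ S, ∀ j ∉ S, |c j| ≤ |c i|

/-!
Candès' argument. Put `h = c - cbar` and let `T₀` carry the `s` largest entries of `cbar`.
Minimality of `‖c‖₁` puts `h` in the cone `‖h_{T₀ᶜ}‖₁ ≤ ‖h_{T₀}‖₁ + 2‖cbar - cstar‖₁`, and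
feasibility of both `c` and `cbar` gives `‖Ψh‖₂ ≤ 2ε`. Split `T₀ᶜ` into blocks `T₁, T₂, …` of `s`
indices each, in decreasing order of `|hᵢ|`; every entry of `T_{j+1}` is at most the average of
`|h|` over `Tⱼ`, so `∑_{j ≥ 2} ‖h_{Tⱼ}‖₂ ≤ ‖h_{T₀ᶜ}‖₁ / √s`. The RIP of order `2s` then bounds
`‖h_{T₀ ∪ T₁}‖₂` by `‖Ψh‖₂` and the tail, through the restricted orthogonality
`|⟪Ψx, Ψy⟫| ≤ δ ‖x‖₂ ‖y‖₂` for disjointly supported `s`-sparse `x, y`; the resulting linear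
inequality can be solved for `‖h_{T₀ ∪ T₁}‖₂` exactly when `(1 + √2) δ < 1`.
-/

open Matrix Function

lemma indicator_eq_zero_of_notMem {n : Type*} (S : Finset n) (x : n → ℝ) :
    ∀ i ∉ S, (S : Set n).indicator x i = 0 :=
  fun _ hi => Set.indicator_of_notMem (Finset.mem_coe.not.mpr hi) x

lemma indicator_union_eq_add {n : Type*} [DecidableEq n] {S T : Finset n} (hST : Disjoint S T)
    (x : n → ℝ) :
    (↑(S ∪ T) : Set n).indicator x = (S : Set n).indicator x + (T : Set n).indicator x := by
  rw [Finset.coe_union]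
  exact Set.indicator_union_of_disjoint (Finset.disjoint_coe.mpr hST) x

section Norms

variable {n : Type*} [Fintype n]

lemma l2_nonneg (x : n → ℝ) : 0 ≤ l2 x := Real.sqrt_nonneg _

lemma l2sq_nonneg (x : n → ℝ) : 0 ≤ l2sq x := Finset.sum_nonneg fun _ _ => sq_nonneg _

lemma sq_l2 (x : n → ℝ) : l2 x ^ 2 = l2sq x := Real.sq_sqrt (l2sq_nonneg x)

lemma l2sq_eq_dotProduct (x : n → ℝ) : l2sq x = x ⬝ᵥ x := by
  simp only [l2sq, dotProduct, sq]

lemma l2_eq_norm (x : n → ℝ) : l2 x = ‖WithLp.toLp 2 x‖ := by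
  simp [l2, EuclideanSpace.norm_eq]

lemma l2_add_le (x y : n → ℝ) : l2 (x + y) ≤ l2 x + l2 y := by
  simpa only [l2_eq_norm, WithLp.toLp_add] using norm_add_le _ _

lemma l2_sum_le {ι : Type*} (J : Finset ι) (x : ι → n → ℝ) :
    l2 (∑ j ∈ J, x j) ≤ ∑ j ∈ J, l2 (x j) := by
  simpa only [l2_eq_norm, WithLp.toLp_sum] using norm_sum_le _ _

lemma l2_neg (x : n → ℝ) : l2 (-x) = l2 x := by
  simp [l2]

lemma eq_zero_of_l2_eq_zero {x : n → ℝ} (h : l2 x = 0) : x = 0 := by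
  rw [l2_eq_norm, norm_eq_zero] at h
  simpa using congrArg WithLp.ofLp h

lemma abs_dotProduct_le (x y : n → ℝ) : |x ⬝ᵥ y| ≤ l2 x * l2 y := by
  simpa [l2_eq_norm, EuclideanSpace.inner_eq_star_dotProduct, dotProduct_comm] using
    abs_real_inner_le_norm (WithLp.toLp 2 x : EuclideanSpace ℝ n) (WithLp.toLp 2 y)

lemma l2sq_smul (a : ℝ) (x : n → ℝ) : l2sq (a • x) = a ^ 2 * l2sq x := by
  simp only [l2sq, Pi.smul_apply, smul_eq_mul, mul_pow, Finset.mul_sum]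

lemma l2sq_indicator (S : Finset n) (x : n → ℝ) :
    l2sq ((S : Set n).indicator x) = ∑ i ∈ S, x i ^ 2 := by
  rw [l2sq, ← Finset.sum_indicator_subset _ (Finset.subset_univ S)]
  congr! 1 with i
  by_cases hi : i ∈ S <;> simp [hi]

lemma l0_le_card_of_eq_zero {x : n → ℝ} {S : Finset n} (hx : ∀ i ∉ S, x i = 0) :
    l0 x ≤ S.card := by
  have hsupp : {i | x i ≠ 0} ⊆ S := fun i hi => by_contra fun hiS => hi (hx i hiS)
  simpa [l0] using Set.ncard_le_ncard hsupp S.finite_toSet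

lemma l2_indicator_mono {S T : Finset n} (hST : S ⊆ T) (x : n → ℝ) :
    l2 ((S : Set n).indicator x) ≤ l2 ((T : Set n).indicator x) := by
  refine Real.sqrt_le_sqrt ?_
  simp only [← l2sq.eq_def, l2sq_indicator]
  exact Finset.sum_le_sum_of_subset_of_nonneg hST fun _ _ _ => sq_nonneg _

lemma l2_indicator_le_sqrt_card_mul {S : Finset n} {x : n → ℝ} {b : ℝ} (hb : 0 ≤ b)
    (hx : ∀ i ∈ S, |x i| ≤ b) : l2 ((S : Set n).indicator x) ≤ √S.card * b := by
  rw [← Real.sqrt_sq hb, ← Real.sqrt_mul (Nat.cast_nonneg _)]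
  refine Real.sqrt_le_sqrt ?_
  simp only [← l2sq.eq_def, l2sq_indicator]
  calc ∑ i ∈ S, x i ^ 2 ≤ ∑ _i ∈ S, b ^ 2 :=
        Finset.sum_le_sum fun i hi => sq_le_sq' (abs_le.mp (hx i hi)).1 (abs_le.mp (hx i hi)).2
    _ = S.card * b ^ 2 := by rw [Finset.sum_const, nsmul_eq_mul]

lemma sum_abs_le_sqrt_card_mul_l2_indicator (S : Finset n) (x : n → ℝ) :
    ∑ i ∈ S, |x i| ≤ √S.card * l2 ((S : Set n).indicator x) := by
  rw [l2, ← l2sq.eq_def, l2sq_indicator, ← Real.sqrt_mul (Nat.cast_nonneg _)]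
  refine Real.le_sqrt_of_sq_le ?_
  simpa only [sq_abs] using sq_sum_le_card_mul_sum_sq (s := S) (f := fun i => |x i|)

lemma l2_indicator_add_l2_indicator_le [DecidableEq n] {S T : Finset n} (hST : Disjoint S T)
    (x : n → ℝ) :
    l2 ((S : Set n).indicator x) + l2 ((T : Set n).indicator x)
      ≤ √2 * l2 ((↑(S ∪ T) : Set n).indicator x) := by
  have hsq : l2 ((S : Set n).indicator x) ^ 2 + l2 ((T : Set n).indicator x) ^ 2
      = l2 ((↑(S ∪ T) : Set n).indicator x) ^ 2 := by
    simp only [sq_l2, l2sq_indicator, Finset.sum_union hST]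
  rw [← Real.sqrt_sq (l2_nonneg ((↑(S ∪ T) : Set n).indicator x)), ← Real.sqrt_mul zero_le_two]
  refine Real.le_sqrt_of_sq_le ?_
  nlinarith [sq_nonneg (l2 ((S : Set n).indicator x) - l2 ((T : Set n).indicator x))]

end Norms

section RestrictedIsometry

variable {m n : Type*} [Fintype m] [Fintype n]

def SatisfiesRIP (Ψ : Matrix m n ℝ) (t : ℕ) (δ : ℝ) : Prop :=
  ∀ c : n → ℝ, l0 c ≤ t →
    (1 - δ) * l2sq c ≤ l2sq (Ψ *ᵥ c) ∧ l2sq (Ψ *ᵥ c) ≤ (1 + δ) * l2sq c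

variable {Ψ : Matrix m n ℝ} {t : ℕ} {δ : ℝ} {x y : n → ℝ}

lemma SatisfiesRIP.l2_mulVec_le (hRIP : SatisfiesRIP Ψ t δ) (hx : l0 x ≤ t) :
    l2 (Ψ *ᵥ x) ≤ √(1 + δ) * l2 x := by
  rw [l2, l2, ← l2sq.eq_def, ← l2sq.eq_def, ← Real.sqrt_mul' _ (l2sq_nonneg x)]
  exact Real.sqrt_le_sqrt (hRIP x hx).2

variable [DecidableEq n] {S S' : Finset n}

/-- Polarization: `4 ⟪Ψx, Ψy⟫ = ‖Ψ(x + y)‖² - ‖Ψ(x - y)‖²`, and `‖x ± y‖² = ‖x‖² + ‖y‖²`. -/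
lemma two_mul_dotProduct_mulVec_le (hRIP : SatisfiesRIP Ψ t δ) (hx : ∀ i ∉ S, x i = 0)
    (hy : ∀ i ∉ S', y i = 0) (hdisj : Disjoint S S') (hcard : S.card + S'.card ≤ t) :
    2 * ((Ψ *ᵥ x) ⬝ᵥ (Ψ *ᵥ y)) ≤ δ * (l2sq x + l2sq y) := by
  have hxy : x ⬝ᵥ y = 0 := Finset.sum_eq_zero fun i _ => by
    by_cases hi : i ∈ S
    · simp [hy i (Finset.disjoint_left.mp hdisj hi)]
    · simp [hx i hi]
  have hl0 : ∀ z : n → ℝ, (∀ i, x i = 0 → y i = 0 → z i = 0) → l0 z ≤ t := by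
    refine fun z hz => (l0_le_card_of_eq_zero fun i hi => hz i ?_ ?_).trans
      ((Finset.card_union_le S S').trans hcard)
    · exact hx i fun h => hi (Finset.mem_union_left _ h)
    · exact hy i fun h => hi (Finset.mem_union_right _ h)
  have hplus := (hRIP (x + y) (hl0 _ fun i h1 h2 => by simp [h1, h2])).2
  have hminus := (hRIP (x - y) (hl0 _ fun i h1 h2 => by simp [h1, h2])).1
  simp only [l2sq_eq_dotProduct, mulVec_add, mulVec_sub, add_dotProduct,
    dotProduct_add, sub_dotProduct, dotProduct_sub, dotProduct_comm y x,
    dotProduct_comm (Ψ *ᵥ y)] at hplus hminus ⊢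
  linarith

lemma dotProduct_mulVec_le (hRIP : SatisfiesRIP Ψ t δ) (hx : ∀ i ∉ S, x i = 0)
    (hy : ∀ i ∉ S', y i = 0) (hdisj : Disjoint S S') (hcard : S.card + S'.card ≤ t) :
    (Ψ *ᵥ x) ⬝ᵥ (Ψ *ᵥ y) ≤ δ * (l2 x * l2 y) := by
  rcases (l2_nonneg x).eq_or_lt with ha | ha
  · rw [← ha]; simp [eq_zero_of_l2_eq_zero ha.symm]
  rcases (l2_nonneg y).eq_or_lt with hb | hb
  · rw [← hb]; simp [eq_zero_of_l2_eq_zero hb.symm]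
  -- the polarization bound for `‖y‖ • x` and `‖x‖ • y`, whose norms agree
  have key := two_mul_dotProduct_mulVec_le hRIP (x := l2 y • x) (y := l2 x • y)
    (fun i hi => by simp [hx i hi]) (fun i hi => by simp [hy i hi]) hdisj hcard
  rw [mulVec_smul, mulVec_smul, smul_dotProduct, dotProduct_smul, l2sq_smul,
    l2sq_smul, ← sq_l2, ← sq_l2, smul_eq_mul, smul_eq_mul] at key
  have hab := mul_pos ha hb
  refine le_of_mul_le_mul_left ?_ hab
  linear_combination key / 2

lemma abs_dotProduct_mulVec_le (hRIP : SatisfiesRIP Ψ t δ) (hx : ∀ i ∉ S, x i = 0)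
    (hy : ∀ i ∉ S', y i = 0) (hdisj : Disjoint S S') (hcard : S.card + S'.card ≤ t) :
    |(Ψ *ᵥ x) ⬝ᵥ (Ψ *ᵥ y)| ≤ δ * (l2 x * l2 y) := by
  refine abs_le.mpr ⟨?_, dotProduct_mulVec_le hRIP hx hy hdisj hcard⟩
  have := dotProduct_mulVec_le hRIP (y := -y) hx (fun i hi => by simp [hy i hi]) hdisj hcard
  rw [mulVec_neg, dotProduct_neg, l2_neg] at this
  linarith

end RestrictedIsometry

section LargestAbs

variable {n : Type*} [DecidableEq n]

lemma exists_subset_largest_abs (f : n → ℝ) (t : ℕ) (A : Finset n) :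
    ∃ S ⊆ A, S.card = min t A.card ∧ ∀ i ∈ S, ∀ j ∈ A \ S, |f j| ≤ |f i| := by
  induction t generalizing A with
  | zero => exact ⟨∅, Finset.empty_subset _, by simp, by simp⟩
  | succ t ih =>
    rcases A.eq_empty_or_nonempty with rfl | hA
    · exact ⟨∅, by simp, by simp, by simp⟩
    obtain ⟨m, hm, hmax⟩ := A.exists_max_image (fun i => |f i|) hA
    obtain ⟨S, hS, hcard, hlarge⟩ := ih (A.erase m)
    have hmS : m ∉ S := fun h => (Finset.mem_erase.mp (hS h)).1 rfl
    refine ⟨insert m S, Finset.insert_subset hm (hS.trans (A.erase_subset m)), ?_, ?_⟩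
    · rw [Finset.card_insert_of_notMem hmS, hcard, Finset.card_erase_of_mem hm]
      have := Finset.card_pos.mpr hA
      omega
    · intro i hi j hj
      obtain ⟨hjA, hjS⟩ := Finset.mem_sdiff.mp hj
      rw [Finset.mem_insert, not_or] at hjS
      rcases Finset.mem_insert.mp hi with rfl | hi
      · exact hmax j hjA
      · exact hlarge i hi j (Finset.mem_sdiff.mpr ⟨Finset.mem_erase.mpr ⟨hjS.1, hjA⟩, hjS.2⟩)

noncomputable def largestAbs (f : n → ℝ) (t : ℕ) (A : Finset n) : Finset n :=
  (exists_subset_largest_abs f t A).choose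

lemma largestAbs_subset (f : n → ℝ) (t : ℕ) (A : Finset n) : largestAbs f t A ⊆ A :=
  (exists_subset_largest_abs f t A).choose_spec.1

lemma card_largestAbs (f : n → ℝ) (t : ℕ) (A : Finset n) :
    (largestAbs f t A).card = min t A.card :=
  (exists_subset_largest_abs f t A).choose_spec.2.1

lemma abs_le_of_mem_largestAbs {f : n → ℝ} {t : ℕ} {A : Finset n} {i j : n}
    (hi : i ∈ largestAbs f t A) (hj : j ∈ A \ largestAbs f t A) : |f j| ≤ |f i| :=
  (exists_subset_largest_abs f t A).choose_spec.2.2 i hi j hj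

end LargestAbs

section SortedBlocks

variable {n : Type*} [Fintype n] [DecidableEq n]

noncomputable def blockRemainder (f : n → ℝ) (s : ℕ) (T₀ : Finset n) : ℕ → Finset n
  | 0 => T₀ᶜ
  | j + 1 => blockRemainder f s T₀ j \ largestAbs f s (blockRemainder f s T₀ j)

/-- Candès' decomposition: `T₀`, then the `s` largest `|f i|` off `T₀`, then the next `s`, … -/
noncomputable def sortedBlock (f : n → ℝ) (s : ℕ) (T₀ : Finset n) : ℕ → Finset n
  | 0 => T₀
  | j + 1 => largestAbs f s (blockRemainder f s T₀ j)

structure IsSortedBlocks (f : n → ℝ) (s N : ℕ) (T : ℕ → Finset n) : Prop where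
  pairwise_disjoint : Pairwise (Disjoint on T)
  card_le : ∀ j, (T j).card ≤ s
  exists_mem : ∀ i, ∃ j < N + 2, i ∈ T j
  mul_abs_le : ∀ j, ∀ k ∈ T (j + 2), s * |f k| ≤ ∑ i ∈ T (j + 1), |f i|

variable (f : n → ℝ) (s : ℕ) (T₀ : Finset n)

lemma blockRemainder_antitone : Antitone (blockRemainder f s T₀) :=
  antitone_nat_of_succ_le fun _ => Finset.sdiff_subset

lemma disjoint_sortedBlock_blockRemainder (j : ℕ) :
    Disjoint (sortedBlock f s T₀ j) (blockRemainder f s T₀ j) := by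
  cases j with
  | zero => exact disjoint_compl_right
  | succ j => exact Finset.disjoint_sdiff

lemma pairwise_disjoint_sortedBlock : Pairwise (Disjoint on sortedBlock f s T₀) := by
  refine (pairwise_disjoint_on _).mpr fun a b hab => ?_
  obtain ⟨b, rfl⟩ := Nat.exists_eq_add_of_lt hab
  refine Finset.disjoint_of_subset_right ?_ (disjoint_sortedBlock_blockRemainder f s T₀ a)
  exact (largestAbs_subset _ _ _).trans (blockRemainder_antitone f s T₀ (Nat.le_add_right a b))

lemma card_blockRemainder_le (hs : 1 ≤ s) (j : ℕ) :
    (blockRemainder f s T₀ j).card ≤ Fintype.card n - j := by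
  induction j with
  | zero => exact Finset.card_le_univ _
  | succ j ih =>
    have hsub := largestAbs_subset f s (blockRemainder f s T₀ j)
    have hcard := card_largestAbs f s (blockRemainder f s T₀ j)
    rw [blockRemainder, Finset.card_sdiff_of_subset hsub]
    omega

lemma exists_mem_sortedBlock_of_notMem {i : n} {j : ℕ} (hi : i ∉ blockRemainder f s T₀ j) :
    ∃ j' ≤ j, i ∈ sortedBlock f s T₀ j' := by
  induction j with
  | zero => exact ⟨0, le_rfl, by simpa [blockRemainder, sortedBlock] using hi⟩
  | succ j ih =>
    by_cases hij : i ∈ blockRemainder f s T₀ j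
    · exact ⟨j + 1, le_rfl, by simpa [blockRemainder, sortedBlock, hij] using hi⟩
    · obtain ⟨j', hj', hmem⟩ := ih hij
      exact ⟨j', hj'.trans j.le_succ, hmem⟩

/-- A block that is followed by a nonempty one is full, and it dominates the later entries. -/
lemma mul_abs_le_sum_sortedBlock (j : ℕ) {k : n} (hk : k ∈ sortedBlock f s T₀ (j + 2)) :
    s * |f k| ≤ ∑ i ∈ sortedBlock f s T₀ (j + 1), |f i| := by
  set R := blockRemainder f s T₀ j
  have hkR : k ∈ R \ largestAbs f s R := largestAbs_subset _ _ _ hk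
  have hfull : (largestAbs f s R).card = s := by
    by_contra hne
    have hcard := card_largestAbs f s R
    have heq : largestAbs f s R = R :=
      Finset.eq_of_subset_of_card_le (largestAbs_subset f s R) (by omega)
    simp [heq] at hkR
  have := Finset.card_nsmul_le_sum _ (fun i => |f i|) _
    fun i hi => abs_le_of_mem_largestAbs (f := f) hi hkR
  rwa [hfull, nsmul_eq_mul] at this

lemma exists_isSortedBlocks (hs : 1 ≤ s) (hT₀ : T₀.card ≤ s) :
    ∃ T : ℕ → Finset n, T 0 = T₀ ∧ IsSortedBlocks f s (Fintype.card n) T := by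
  refine ⟨sortedBlock f s T₀, rfl, pairwise_disjoint_sortedBlock f s T₀, ?_, fun i => ?_,
    fun j _ hk => mul_abs_le_sum_sortedBlock f s T₀ j hk⟩
  · rintro (_ | j)
    exacts [hT₀, (card_largestAbs f s _).trans_le (min_le_left _ _)]
  · have hempty : blockRemainder f s T₀ (Fintype.card n) = ∅ :=
      Finset.card_eq_zero.mp (by simpa using card_blockRemainder_le f s T₀ hs (Fintype.card n))
    obtain ⟨j, hj, hmem⟩ := exists_mem_sortedBlock_of_notMem f s T₀ (i := i)
      (j := Fintype.card n) (by simp [hempty])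
    exact ⟨j, by omega, hmem⟩

end SortedBlocks

namespace IsSortedBlocks

variable {n : Type*} {f : n → ℝ} {s N : ℕ} {T : ℕ → Finset n}

lemma sum_indicator_eq (hT : IsSortedBlocks f s N T) (x : n → ℝ) :
    ∑ j ∈ Finset.range (N + 2), (T j : Set n).indicator x = x := by
  funext i
  obtain ⟨j₀, hj₀, hi⟩ := hT.exists_mem i
  rw [Finset.sum_apply, Finset.sum_eq_single_of_mem j₀ (Finset.mem_range.mpr hj₀)]
  · simp [hi]
  · intro j _ hj
    exact indicator_eq_zero_of_notMem _ x i (Finset.disjoint_right.mp (hT.pairwise_disjoint hj) hi)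

lemma eq_indicator_add_sum [DecidableEq n] (hT : IsSortedBlocks f s N T) (x : n → ℝ) :
    x = (↑(T 0 ∪ T 1) : Set n).indicator x
      + ∑ j ∈ Finset.range N, (T (j + 2) : Set n).indicator x := by
  conv_lhs => rw [← hT.sum_indicator_eq x]
  rw [Finset.sum_range_succ', Finset.sum_range_succ',
    indicator_union_eq_add (hT.pairwise_disjoint zero_ne_one)]
  simp only [add_assoc, Nat.reduceAdd]
  abel

lemma l2_indicator_le [Fintype n] (hT : IsSortedBlocks f s N T) (hs : 1 ≤ s) (j : ℕ) :
    l2 ((T (j + 2) : Set n).indicator f) ≤ (∑ i ∈ T (j + 1), |f i|) / √s := by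
  set L := ∑ i ∈ T (j + 1), |f i|
  have hs' : (0 : ℝ) < s := by exact_mod_cast hs
  have hL : 0 ≤ L := Finset.sum_nonneg fun _ _ => abs_nonneg _
  calc l2 ((T (j + 2) : Set n).indicator f) ≤ √(T (j + 2)).card * (L / s) :=
        l2_indicator_le_sqrt_card_mul (by positivity)
          fun k hk => (le_div_iff₀' hs').mpr (hT.mul_abs_le j k hk)
    _ ≤ √s * (L / s) := by gcongr; exact_mod_cast hT.card_le _
    _ = L / √s := by
        field_simp
        rw [Real.sq_sqrt hs'.le, mul_comm]

lemma sum_l2_indicator_le [Fintype n] [DecidableEq n] (hT : IsSortedBlocks f s N T) (hs : 1 ≤ s) :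
    ∑ j ∈ Finset.range N, l2 ((T (j + 2) : Set n).indicator f)
      ≤ (∑ i ∈ (T 0)ᶜ, |f i|) / √s := by
  have hdisj : (↑(Finset.range N) : Set ℕ).PairwiseDisjoint (fun j => T (j + 1)) :=
    fun a _ b _ hab => hT.pairwise_disjoint (by simpa using hab)
  have hsub : (Finset.range N).biUnion (fun j => T (j + 1)) ⊆ (T 0)ᶜ := by
    intro i hi
    obtain ⟨j, -, hij⟩ := Finset.mem_biUnion.mp hi
    exact Finset.mem_compl.mpr (Finset.disjoint_left.mp (hT.pairwise_disjoint j.succ_ne_zero) hij)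
  calc ∑ j ∈ Finset.range N, l2 ((T (j + 2) : Set n).indicator f)
      ≤ ∑ j ∈ Finset.range N, (∑ i ∈ T (j + 1), |f i|) / √s :=
        Finset.sum_le_sum fun j _ => hT.l2_indicator_le hs j
    _ = (∑ i ∈ (Finset.range N).biUnion (fun j => T (j + 1)), |f i|) / √s := by
        rw [Finset.sum_biUnion hdisj, Finset.sum_div]
    _ ≤ (∑ i ∈ (T 0)ᶜ, |f i|) / √s := by
        gcongr

variable {m : Type*} [Fintype m] [Fintype n] [DecidableEq n] {Ψ : Matrix m n ℝ} {δ : ℝ}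

lemma abs_dotProduct_mulVec_indicator_le (hT : IsSortedBlocks f s N T)
    (hRIP : SatisfiesRIP Ψ (2 * s) δ) (hδ : 0 ≤ δ) (j : ℕ) :
    |(Ψ *ᵥ (↑(T 0 ∪ T 1) : Set n).indicator f) ⬝ᵥ (Ψ *ᵥ (T (j + 2) : Set n).indicator f)|
      ≤ √2 * δ * (l2 ((↑(T 0 ∪ T 1) : Set n).indicator f)
        * l2 ((T (j + 2) : Set n).indicator f)) := by
  set y := (T (j + 2) : Set n).indicator f
  have hblock : ∀ k < 2, |(Ψ *ᵥ (T k : Set n).indicator f) ⬝ᵥ (Ψ *ᵥ y)|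
      ≤ δ * (l2 ((T k : Set n).indicator f) * l2 y) := fun k hk =>
    _root_.abs_dotProduct_mulVec_le hRIP (indicator_eq_zero_of_notMem _ f)
      (indicator_eq_zero_of_notMem _ f) (hT.pairwise_disjoint (by omega : k ≠ j + 2))
      (by linarith [hT.card_le k, hT.card_le (j + 2)])
  have h01 := hT.pairwise_disjoint zero_ne_one
  calc |(Ψ *ᵥ (↑(T 0 ∪ T 1) : Set n).indicator f) ⬝ᵥ (Ψ *ᵥ y)|
      ≤ |(Ψ *ᵥ (T 0 : Set n).indicator f) ⬝ᵥ (Ψ *ᵥ y)|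
        + |(Ψ *ᵥ (T 1 : Set n).indicator f) ⬝ᵥ (Ψ *ᵥ y)| := by
        rw [indicator_union_eq_add h01, mulVec_add, add_dotProduct]
        exact abs_add_le _ _
    _ ≤ δ * l2 y * (l2 ((T 0 : Set n).indicator f) + l2 ((T 1 : Set n).indicator f)) := by
        linarith [hblock 0 (by norm_num), hblock 1 (by norm_num)]
    _ ≤ δ * l2 y * (√2 * l2 ((↑(T 0 ∪ T 1) : Set n).indicator f)) := by
        gcongr
        · exact mul_nonneg hδ (l2_nonneg y)
        · exact l2_indicator_add_l2_indicator_le h01 f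
    _ = _ := by ring

/-- Expanding `‖Ψ h_{T₀ ∪ T₁}‖²` against `Ψ h = Ψ h_{T₀ ∪ T₁} + ∑ⱼ Ψ h_{Tⱼ₊₂}`. -/
lemma one_sub_mul_l2_indicator_le (hT : IsSortedBlocks f s N T)
    (hRIP : SatisfiesRIP Ψ (2 * s) δ) (hδ : 0 ≤ δ) :
    (1 - δ) * l2 ((↑(T 0 ∪ T 1) : Set n).indicator f)
      ≤ √(1 + δ) * l2 (Ψ *ᵥ f)
        + √2 * δ * ∑ j ∈ Finset.range N, l2 ((T (j + 2) : Set n).indicator f) := by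
  set x := (↑(T 0 ∪ T 1) : Set n).indicator f
  set y := fun j => (T (j + 2) : Set n).indicator f
  have hx : l0 x ≤ 2 * s := (l0_le_card_of_eq_zero (indicator_eq_zero_of_notMem _ f)).trans
    ((Finset.card_union_le _ _).trans (by linarith [hT.card_le 0, hT.card_le 1]))
  have hexpand : (Ψ *ᵥ x) ⬝ᵥ (Ψ *ᵥ f)
      = l2sq (Ψ *ᵥ x) + ∑ j ∈ Finset.range N, (Ψ *ᵥ x) ⬝ᵥ (Ψ *ᵥ y j) := by
    conv_lhs => rw [hT.eq_indicator_add_sum f]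
    rw [mulVec_add, mulVec_sum, dotProduct_add, dotProduct_sum, l2sq_eq_dotProduct]
  have hlower : (1 - δ) * l2 x ^ 2 ≤ l2sq (Ψ *ᵥ x) := sq_l2 x ▸ (hRIP x hx).1
  have hhead : (Ψ *ᵥ x) ⬝ᵥ (Ψ *ᵥ f) ≤ l2 x * (√(1 + δ) * l2 (Ψ *ᵥ f)) :=
    (le_abs_self _).trans <| (abs_dotProduct_le _ _).trans <| by
      nlinarith [hRIP.l2_mulVec_le hx, l2_nonneg (Ψ *ᵥ f)]
  have htail : -∑ j ∈ Finset.range N, (Ψ *ᵥ x) ⬝ᵥ (Ψ *ᵥ y j)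
      ≤ l2 x * (√2 * δ * ∑ j ∈ Finset.range N, l2 (y j)) := by
    rw [← Finset.sum_neg_distrib, Finset.mul_sum, Finset.mul_sum]
    exact Finset.sum_le_sum fun j _ =>
      (neg_le_abs _).trans ((hT.abs_dotProduct_mulVec_indicator_le hRIP hδ j).trans_eq (by ring))
  rcases (l2_nonneg x).eq_or_lt with h0 | hpos
  · rw [← h0, mul_zero]
    exact add_nonneg (mul_nonneg (Real.sqrt_nonneg _) (l2_nonneg _)) <|
      mul_nonneg (mul_nonneg (Real.sqrt_nonneg _) hδ) (Finset.sum_nonneg fun j _ => l2_nonneg _)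
  · refine le_of_mul_le_mul_left ?_ hpos
    linarith

end IsSortedBlocks

section BasisPursuit

variable {m n : Type*} [Fintype m] [Fintype n] [DecidableEq n]

lemma one_sub_sqrt_two_add_one_mul_pos {δ : ℝ} (hδ : δ < √2 - 1) : 0 < 1 - (√2 + 1) * δ := by
  nlinarith [Real.sq_sqrt (zero_le_two : (0 : ℝ) ≤ 2), Real.sqrt_nonneg 2]

lemma sum_compl_abs_sub_le_of_l1_le {c cbar : n → ℝ} (hl1 : l1 c ≤ l1 cbar) (T : Finset n) :
    ∑ i ∈ Tᶜ, |(c - cbar) i| ≤ ∑ i ∈ T, |(c - cbar) i| + 2 * ∑ i ∈ Tᶜ, |cbar i| := by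
  have hT : ∑ i ∈ T, |cbar i| - ∑ i ∈ T, |(c - cbar) i| ≤ ∑ i ∈ T, |c i| := by
    rw [← Finset.sum_sub_distrib]
    refine Finset.sum_le_sum fun i _ => ?_
    rw [Pi.sub_apply, abs_sub_comm]
    linarith [abs_sub_abs_le_abs_sub (cbar i) (c i)]
  have hTc : ∑ i ∈ Tᶜ, |(c - cbar) i| - ∑ i ∈ Tᶜ, |cbar i| ≤ ∑ i ∈ Tᶜ, |c i| := by
    rw [← Finset.sum_sub_distrib]
    refine Finset.sum_le_sum fun i _ => ?_
    rw [Pi.sub_apply]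
    linarith [abs_sub (c i) (cbar i)]
  rw [l1, l1, ← Finset.sum_add_sum_compl T, ← Finset.sum_add_sum_compl T (fun i => |cbar i|)] at hl1
  linarith

lemma l1_sub_eq_sum_compl {c c' : n → ℝ} {S : Finset n}
    (hc' : ∀ i, c' i = if i ∈ S then c i else 0) : l1 (c - c') = ∑ i ∈ Sᶜ, |c i| := by
  rw [l1, ← Finset.sum_add_sum_compl S, Finset.sum_eq_zero fun i hi => by simp [hc', hi], zero_add]
  exact Finset.sum_congr rfl fun i hi => by simp [hc', Finset.mem_compl.mp hi]

theorem l2_le_of_satisfiesRIP_of_sum_compl_le {Ψ : Matrix m n ℝ} {s : ℕ} {δ : ℝ} (hs : 1 ≤ s)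
    (hRIP : SatisfiesRIP Ψ (2 * s) δ) (hδ0 : 0 ≤ δ) (hδ1 : δ < √2 - 1)
    {h : n → ℝ} {T₀ : Finset n} (hT₀ : T₀.card ≤ s) {σ : ℝ}
    (hcone : ∑ i ∈ T₀ᶜ, |h i| ≤ ∑ i ∈ T₀, |h i| + 2 * σ) :
    l2 h ≤ 2 * (1 + (√2 - 1) * δ) / (1 - (√2 + 1) * δ) * (σ / √s)
      + 2 * √(1 + δ) / (1 - (√2 + 1) * δ) * l2 (Ψ *ᵥ h) := by
  obtain ⟨T, rfl, hT⟩ := exists_isSortedBlocks h s T₀ hs hT₀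
  set E := σ / √s
  set A := l2 ((↑(T 0 ∪ T 1) : Set n).indicator h)
  set tail := ∑ j ∈ Finset.range (Fintype.card n), l2 ((T (j + 2) : Set n).indicator h)
  have hsqrt_s : 0 < √(s : ℝ) := Real.sqrt_pos.mpr (by exact_mod_cast hs)
  have hhead : (1 - δ) * A ≤ √(1 + δ) * l2 (Ψ *ᵥ h) + √2 * δ * tail :=
    hT.one_sub_mul_l2_indicator_le hRIP hδ0
  have htail : tail ≤ A + 2 * E := by
    have hT₀sum : ∑ i ∈ T 0, |h i| ≤ √s * A :=
      (sum_abs_le_sqrt_card_mul_l2_indicator (T 0) h).trans <|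
        mul_le_mul (Real.sqrt_le_sqrt (by exact_mod_cast hT₀))
          (l2_indicator_mono Finset.subset_union_left h) (l2_nonneg _) (Real.sqrt_nonneg _)
    calc tail ≤ (∑ i ∈ (T 0)ᶜ, |h i|) / √s := hT.sum_l2_indicator_le hs
      _ ≤ (√s * A + 2 * σ) / √s := by gcongr; linarith
      _ = A + 2 * E := by rw [add_div, mul_div_cancel_left₀ _ hsqrt_s.ne', mul_div_assoc]
  have hsplit : l2 h ≤ A + tail := by
    have := l2_add_le ((↑(T 0 ∪ T 1) : Set n).indicator h)
      (∑ j ∈ Finset.range (Fintype.card n), (T (j + 2) : Set n).indicator h)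
    rw [← hT.eq_indicator_add_sum h] at this
    exact this.trans (add_le_add le_rfl (l2_sum_le _ _))
  have hd := one_sub_sqrt_two_add_one_mul_pos hδ1
  have hdA : (1 - (√2 + 1) * δ) * A ≤ √(1 + δ) * l2 (Ψ *ᵥ h) + 2 * √2 * δ * E := by
    nlinarith [mul_le_mul_of_nonneg_left htail (mul_nonneg (Real.sqrt_nonneg 2) hδ0)]
  have hh := mul_le_mul_of_nonneg_left (hsplit.trans (add_le_add le_rfl htail)) hd.le
  rw [div_mul_eq_mul_div, div_mul_eq_mul_div, ← add_div, le_div_iff₀ hd]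
  linarith

end BasisPursuit

/-- Candès, RIP-based recovery guarantee for basis pursuit denoising.
If `δ_{2s} ≤ δ < √2 − 1`, then any ℓ₁ minimizer over the feasible set
`{c : ‖Ψc − y‖₂ ≤ ε}` with `y = Ψc̄ + e`, `‖e‖₂ ≤ ε`, satisfies
`‖c − c̄‖₂ ≤ C₁‖c̄ − c̄*‖₁/√s + C₂ ε`, with `C₁, C₂ > 0` depending only on `δ`. -/
theorem rip_basis_pursuit_denoising_error
    (δ : ℝ) (hδ0 : 0 < δ) (hδ1 : δ < Real.sqrt 2 - 1) :
    ∃ C₁ C₂ : ℝ, 0 < C₁ ∧ 0 < C₂ ∧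
      ∀ (M K s : ℕ), 1 ≤ s →
      ∀ (Ψ : Matrix (Fin M) (Fin K) ℝ),
        -- the restricted isometry constant `δ_{2s}` of `Ψ` satisfies `δ_{2s} ≤ δ`,
        -- i.e. the RIP inequality of order `2s` holds with constant `δ`:
        (∀ c : Fin K → ℝ, l0 c ≤ 2 * s →
          (1 - δ) * l2sq c ≤ l2sq (Ψ.mulVec c) ∧
            l2sq (Ψ.mulVec c) ≤ (1 + δ) * l2sq c) →
      ∀ (cbar : Fin K → ℝ) (ε : ℝ), 0 ≤ ε →
      ∀ (e : Fin M → ℝ), l2 e ≤ ε →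
      ∀ (c : Fin K → ℝ),
        -- `c` is feasible for the noisy measurements `y = Ψ c̄ + e` ...
        l2 (Ψ.mulVec c - (Ψ.mulVec cbar + e)) ≤ ε →
        -- ... and is a minimizer of the ℓ₁ norm over the feasible set:
        (∀ c' : Fin K → ℝ, l2 (Ψ.mulVec c' - (Ψ.mulVec cbar + e)) ≤ ε → l1 c ≤ l1 c') →
      ∀ cstar : Fin K → ℝ, IsBestSTerm s cbar cstar →
        l2 (c - cbar) ≤ C₁ * l1 (cbar - cstar) / Real.sqrt s + C₂ * ε := by
  have hd := one_sub_sqrt_two_add_one_mul_pos hδ1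
  refine ⟨2 * (1 + (√2 - 1) * δ) / (1 - (√2 + 1) * δ), 4 * √(1 + δ) / (1 - (√2 + 1) * δ),
    div_pos (by nlinarith [Real.one_lt_sqrt_two]) hd, div_pos (by positivity) hd, ?_⟩
  intro M K s hs Ψ hRIP cbar ε _ e he c hfeas hmin cstar ⟨T₀, hT₀, hcstar, _⟩
  have hcbar : l1 c ≤ l1 cbar := hmin cbar <| by
    rwa [show Ψ *ᵥ cbar - (Ψ *ᵥ cbar + e) = -e by abel, l2_neg]
  have htube : l2 (Ψ *ᵥ (c - cbar)) ≤ 2 * ε := by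
    rw [show Ψ *ᵥ (c - cbar) = (Ψ *ᵥ c - (Ψ *ᵥ cbar + e)) + e by rw [mulVec_sub]; abel]
    linarith [l2_add_le (Ψ *ᵥ c - (Ψ *ᵥ cbar + e)) e]
  have hcone := sum_compl_abs_sub_le_of_l1_le hcbar T₀
  rw [← l1_sub_eq_sum_compl hcstar] at hcone
  calc l2 (c - cbar)
      ≤ 2 * (1 + (√2 - 1) * δ) / (1 - (√2 + 1) * δ) * (l1 (cbar - cstar) / √s)
        + 2 * √(1 + δ) / (1 - (√2 + 1) * δ) * l2 (Ψ *ᵥ (c - cbar)) :=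
        l2_le_of_satisfiesRIP_of_sum_compl_le hs hRIP hδ0.le hδ1 (hT₀.trans_le (min_le_left _ _))
          hcone
    _ ≤ 2 * (1 + (√2 - 1) * δ) / (1 - (√2 + 1) * δ) * (l1 (cbar - cstar) / √s)
        + 2 * √(1 + δ) / (1 - (√2 + 1) * δ) * (2 * ε) := by gcongr
    _ = _ := by ring
end

section
/- For any matrix Ψ ∈ ℝ^{M×K} with K ≥ 2 nonzero columns and μ(Ψ) > 0, the following holds: spark(Ψ) ≥ 1 + 1/μ(Ψ). -/
open Finset

/-- The set of pairwise normalized column cross-correlations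
`|ψ_iᵀψ_j| / (‖ψ_i‖₂‖ψ_j‖₂)`, `i ≠ j`; the mutual-coherence `μ(Ψ)` is its
greatest element. -/
def coherenceSet {M K : ℕ} (Ψ : Matrix (Fin M) (Fin K) ℝ) : Set ℝ :=
  {r | ∃ i j : Fin K, i ≠ j ∧
    r = |∑ m, Ψ m i * Ψ m j| /
        (Real.sqrt (∑ m, (Ψ m i) ^ 2) * Real.sqrt (∑ m, (Ψ m j) ^ 2))}

/-- spark–mutual-coherence bound: for a matrix `Ψ` with `K ≥ 2`
nonzero columns and mutual-coherence `μ(Ψ) > 0`, `spark(Ψ) ≥ 1 + 1/μ(Ψ)`, i.e.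
every nonzero vector `x` in the null space of `Ψ` has `‖x‖₀ ≥ 1 + 1/μ(Ψ)`. -/
theorem spark_ge_one_add_inv_mutual_coherence {M K : ℕ} (hK : 2 ≤ K)
    (Ψ : Matrix (Fin M) (Fin K) ℝ)
    (hcols : ∀ j, (fun i => Ψ i j) ≠ 0)
    (μ : ℝ) (hμpos : 0 < μ) (hμ : IsGreatest (coherenceSet Ψ) μ) :
    ∀ x : Fin K → ℝ, x ≠ 0 → Ψ.mulVec x = 0 → 1 + 1 / μ ≤ (l0 x : ℝ) := by
  intro x hx hΨx
  classical
  set a : Fin K → ℝ := fun j => Real.sqrt (∑ m, (Ψ m j) ^ 2) with ha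
  have hapos : ∀ j, 0 < a j := by
    intro j
    apply Real.sqrt_pos.2
    have hne : ∃ m, Ψ m j ≠ 0 := by
      by_contra h; push_neg at h
      exact hcols j (funext fun m => h m)
    obtain ⟨m, hm⟩ := hne
    exact Finset.sum_pos' (fun i _ => sq_nonneg _) ⟨m, Finset.mem_univ m, by positivity⟩
  have hasq : ∀ j, a j ^ 2 = ∑ m, (Ψ m j) ^ 2 := fun j =>
    Real.sq_sqrt (Finset.sum_nonneg fun i _ => sq_nonneg _)
  set G : Fin K → Fin K → ℝ := fun i j => ∑ m, Ψ m i * Ψ m j with hG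
  have hGii : ∀ i, G i i = a i ^ 2 := by
    intro i; rw [hasq]; simp [hG, sq]
  have hGbound : ∀ i j, i ≠ j → |G i j| ≤ μ * (a i * a j) := by
    intro i j hij
    have hmem : |G i j| / (a i * a j) ∈ coherenceSet Ψ := ⟨i, j, hij, rfl⟩
    have hle := hμ.2 hmem
    have hprod : 0 < a i * a j := mul_pos (hapos i) (hapos j)
    rw [div_le_iff₀ hprod] at hle
    linarith
  set y : Fin K → ℝ := fun j => |x j| * a j with hy
  set S : ℝ := ∑ j, y j with hS
  have hynn : ∀ j, 0 ≤ y j := fun j => mul_nonneg (abs_nonneg _) (hapos j).le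
  have hkey : ∀ i, x i ≠ 0 → y i ≤ μ * (S - y i) := by
    intro i _
    have h0 : ∑ j, x j * G i j = 0 := by
      have hrow : ∀ m, ∑ j, Ψ m j * x j = 0 := by
        intro m
        have := congrFun hΨx m
        simpa [Matrix.mulVec, dotProduct] using this
      calc ∑ j, x j * G i j = ∑ j, ∑ m, x j * (Ψ m i * Ψ m j) := by
            simp [hG, Finset.mul_sum]
        _ = ∑ m, Ψ m i * ∑ j, Ψ m j * x j := by
            rw [Finset.sum_comm]
            refine Finset.sum_congr rfl fun m _ => ?_
            rw [Finset.mul_sum]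
            exact Finset.sum_congr rfl fun j _ => by ring
        _ = 0 := by simp [hrow]
    rw [← Finset.sum_erase_add Finset.univ _ (Finset.mem_univ i)] at h0
    have h2 : |x i| * a i ^ 2 ≤ μ * a i * ∑ j ∈ Finset.univ.erase i, y j := by
      have : |x i * G i i| = |∑ j ∈ Finset.univ.erase i, x j * G i j| := by
        have : x i * G i i = -∑ j ∈ Finset.univ.erase i, x j * G i j := by linarith
        rw [this, abs_neg]
      calc |x i| * a i ^ 2 = |x i * G i i| := by
            rw [abs_mul, hGii]
            congr 1
            exact (abs_of_nonneg (by positivity)).symm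
        _ = |∑ j ∈ Finset.univ.erase i, x j * G i j| := this
        _ ≤ ∑ j ∈ Finset.univ.erase i, |x j * G i j| := Finset.abs_sum_le_sum_abs _ _
        _ ≤ ∑ j ∈ Finset.univ.erase i, |x j| * (μ * (a i * a j)) := by
            refine Finset.sum_le_sum fun j hj => ?_
            rw [abs_mul]
            exact mul_le_mul_of_nonneg_left
              (hGbound i j (fun h => (Finset.mem_erase.1 hj).1 h.symm)) (abs_nonneg _)
        _ = μ * a i * ∑ j ∈ Finset.univ.erase i, y j := by
            rw [Finset.mul_sum]
            exact Finset.sum_congr rfl fun j _ => by simp [hy]; ring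
    have herase : ∑ j ∈ Finset.univ.erase i, y j = S - y i := by
      have h := Finset.sum_erase_add Finset.univ y (Finset.mem_univ i)
      rw [hS]; linarith
    rw [herase] at h2
    have hai := hapos i
    have hyi : y i * a i = |x i| * a i ^ 2 := by rw [hy]; ring
    nlinarith [h2, hai]
  set T : Finset (Fin K) := Finset.univ.filter (fun i => x i ≠ 0) with hT
  have hST : S = ∑ i ∈ T, y i := by
    rw [hS]
    refine (Finset.sum_subset (Finset.subset_univ T) fun i _ hi => ?_).symm
    have : x i = 0 := by simpa [hT] using hi
    simp [hy, this]
  have hSpos : 0 < S := by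
    obtain ⟨i, hi⟩ := Function.ne_iff.1 hx
    have hyi : 0 < y i := mul_pos (abs_pos.2 (by simpa using hi)) (hapos i)
    have := Finset.single_le_sum (fun j _ => hynn j) (Finset.mem_univ i)
    rw [hS]; linarith
  have hsum : S ≤ μ * ((T.card : ℝ) * S - S) := by
    calc S = ∑ i ∈ T, y i := hST
      _ ≤ ∑ i ∈ T, μ * (S - y i) := by
          refine Finset.sum_le_sum fun i hi => ?_
          exact hkey i (by simpa [hT] using hi)
      _ = μ * ((T.card : ℝ) * S - S) := by
          rw [← Finset.mul_sum, Finset.sum_sub_distrib, Finset.sum_const, ← hST]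
          simp [nsmul_eq_mul]
  have h1μ : 1 + μ ≤ (T.card : ℝ) * μ := by
    have : (1 + μ) * S ≤ (T.card : ℝ) * μ * S := by nlinarith
    exact le_of_mul_le_mul_right this hSpos
  have hl0 : (l0 x : ℝ) = (T.card : ℝ) := by
    congr 1
    rw [l0, Set.ncard_eq_toFinset_card']
    congr 1
    ext i
    simp [hT]
  rw [hl0]
  have hdiv : 1 / μ ≤ (T.card : ℝ) - 1 := by
    rw [div_le_iff₀ hμpos]; nlinarith
  linarith
end

section
/- Let Ψ ∈ ℝ^{M×K} and s ∈ ℕ with spark(Ψ) > 2s. Then for every s-sparse vector c̄ ∈ ℝ^K, c̄ is the unique s-sparse solution of Ψc = Ψc̄; in particular, c̄ is the unique minimizer of ‖c‖₀ over {c ∈ ℝ^K : Ψc = Ψc̄}. -/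
open Finset

lemma l0_sub_le {n : Type*} [Fintype n] (x y : n → ℝ) :
    l0 (x - y) ≤ l0 x + l0 y := by
  have hsub : {i | (x - y) i ≠ 0} ⊆ {i | x i ≠ 0} ∪ {i | y i ≠ 0} := by
    intro i hi
    by_contra h
    simp only [Set.mem_union, Set.mem_setOf_eq, not_or, not_not] at h
    simp only [Set.mem_setOf_eq, Pi.sub_apply] at hi
    rcases h with ⟨hx, hy⟩
    exact hi (by simp [hx, hy])
  calc l0 (x - y) ≤ ({i | x i ≠ 0} ∪ {i | y i ≠ 0}).ncard :=
        Set.ncard_le_ncard hsub (Set.toFinite _)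
    _ ≤ l0 x + l0 y := Set.ncard_union_le _ _

/-- spark condition for exact ℓ₀ recovery.
If `spark(Ψ) > 2s`, i.e. every nonzero vector of the null space of `Ψ` has more
than `2s` nonzero entries, then every `s`-sparse `c̄` is the unique `s`-sparse
solution of `Ψ c = Ψ c̄`, and in particular the unique minimizer of `‖c‖₀` over
`{c : Ψ c = Ψ c̄}`. -/
theorem spark_gt_two_s_unique_sparse_solution {M K : ℕ}
    (Ψ : Matrix (Fin M) (Fin K) ℝ) (s : ℕ)
    (hspark : ∀ x : Fin K → ℝ, x ≠ 0 → Ψ.mulVec x = 0 → 2 * s < l0 x)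
    (cbar : Fin K → ℝ) (hcbar : l0 cbar ≤ s) :
    -- `c̄` is the unique `s`-sparse solution of `Ψ c = Ψ c̄`:
    (∀ c : Fin K → ℝ, l0 c ≤ s → Ψ.mulVec c = Ψ.mulVec cbar → c = cbar) ∧
    -- in particular, `c̄` is the unique ℓ₀ minimizer over `{c : Ψ c = Ψ c̄}`:
    (∀ c : Fin K → ℝ, Ψ.mulVec c = Ψ.mulVec cbar → c ≠ cbar → l0 cbar < l0 c) := by
  have huniq : ∀ c : Fin K → ℝ, l0 c ≤ s → Ψ.mulVec c = Ψ.mulVec cbar → c = cbar := by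
    intro c hc heq
    by_contra hne
    have hx : c - cbar ≠ 0 := sub_ne_zero.mpr hne
    have hnull : Ψ.mulVec (c - cbar) = 0 := by
      rw [Matrix.mulVec_sub, heq, sub_self]
    have h1 := hspark _ hx hnull
    have h2 := l0_sub_le c cbar
    omega
  refine ⟨huniq, fun c heq hne => ?_⟩
  by_contra hlt
  push_neg at hlt
  exact hne (huniq c (hlt.trans hcbar) heq)
end

section
/- Let Ψ ∈ ℝ^{M×K} have nonzero columns and mutual-coherence μ(Ψ) > 0, and let c̄ ∈ ℝ^K satisfy ‖c̄‖₀ < (1 + 1/μ(Ψ))/2. Then c̄ is the unique minimizer of ‖c‖₀ over {c ∈ ℝ^K : Ψc = Ψc̄}. -/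
open Finset

lemma l0_eq_card {n : Type*} [Fintype n] (x : n → ℝ) [DecidableEq ℝ] :
    l0 x = (Finset.univ.filter (fun i => x i ≠ 0)).card := by
  rw [l0, ← Set.ncard_coe_finset]
  congr 1
  ext i
  simp

/-- mutual-coherence condition for uniqueness of the ℓ₀
minimizer. If `Ψ` has nonzero columns, `μ(Ψ) > 0`, and
`‖c̄‖₀ < (1 + 1/μ(Ψ))/2`, then `c̄` is the unique minimizer of `‖c‖₀` over
`{c : Ψ c = Ψ c̄}`. -/
theorem mutual_coherence_unique_l0_minimizer {M K : ℕ}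
    (Ψ : Matrix (Fin M) (Fin K) ℝ)
    (hcols : ∀ j, (fun i => Ψ i j) ≠ 0)
    (μ : ℝ) (hμpos : 0 < μ) (hμ : IsGreatest (coherenceSet Ψ) μ)
    (cbar : Fin K → ℝ) (hcbar : (l0 cbar : ℝ) < (1 + 1 / μ) / 2) :
    ∀ c : Fin K → ℝ, Ψ.mulVec c = Ψ.mulVec cbar → c ≠ cbar → l0 cbar < l0 c := by
  classical
  intro c hΨc hne
  by_contra hlt
  push_neg at hlt
  set h : Fin K → ℝ := c - cbar with hhdef
  have hΨh : Ψ.mulVec h = 0 := by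
    rw [hhdef, Matrix.mulVec_sub, hΨc, sub_self]
  -- column norms
  set n : Fin K → ℝ := fun j => Real.sqrt (∑ m, (Ψ m j) ^ 2) with hndef
  have hnpos : ∀ j, 0 < n j := by
    intro j
    have hex : ∃ m, Ψ m j ≠ 0 := by
      by_contra hc
      push_neg at hc
      exact hcols j (funext fun m => hc m)
    obtain ⟨m, hm⟩ := hex
    apply Real.sqrt_pos.mpr
    apply Finset.sum_pos' (fun i _ => sq_nonneg _)
    exact ⟨m, Finset.mem_univ m, by positivity⟩
  -- Gram entries
  set g : Fin K → Fin K → ℝ := fun i j => ∑ m, Ψ m i * Ψ m j with hgdef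
  have hgbound : ∀ i j, i ≠ j → |g i j| ≤ μ * (n i * n j) := by
    intro i j hij
    have hmem : |g i j| / (n i * n j) ∈ coherenceSet Ψ := ⟨i, j, hij, rfl⟩
    have := hμ.2 hmem
    have hpos : 0 < n i * n j := mul_pos (hnpos i) (hnpos j)
    rw [div_le_iff₀ hpos] at this
    linarith [this]
  have hgii : ∀ i, g i i = n i ^ 2 := by
    intro i
    rw [hndef]
    simp only
    rw [Real.sq_sqrt (Finset.sum_nonneg fun m _ => sq_nonneg _)]
    apply Finset.sum_congr rfl; intro m _; ring
  -- orthogonality equations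
  have heq : ∀ i, ∑ j, g i j * h j = 0 := by
    intro i
    have : ∑ j, g i j * h j = ∑ m, Ψ m i * Ψ.mulVec h m := by
      simp only [hgdef, Matrix.mulVec, dotProduct, Finset.mul_sum, Finset.sum_mul]
      rw [Finset.sum_comm]
      apply Finset.sum_congr rfl; intro m _
      apply Finset.sum_congr rfl; intro j _
      ring
    rw [this, hΨh]
    simp
  -- support of h
  set S : Finset (Fin K) := Finset.univ.filter (fun j => h j ≠ 0) with hSdef
  have hSne : S.Nonempty := by
    have hh0 : h ≠ 0 := sub_ne_zero.mpr hne
    obtain ⟨j, hj⟩ := Function.ne_iff.mp hh0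
    exact ⟨j, by simp only [hSdef, Finset.mem_filter, Finset.mem_univ, true_and]; simpa using hj⟩
  obtain ⟨i, hiS, hmax⟩ := S.exists_max_image (fun j => n j * |h j|) hSne
  have hhi : h i ≠ 0 := by simpa [hSdef] using hiS
  have hdipos : 0 < n i * |h i| := mul_pos (hnpos i) (abs_pos.mpr hhi)
  -- main Gershgorin estimate
  have hkey : n i ^ 2 * |h i| ≤ μ * ((S.card : ℝ) - 1) * (n i * (n i * |h i|)) := by
    have hsplit : g i i * h i = -∑ j ∈ Finset.univ.erase i, g i j * h j := by
      have := heq i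
      rw [← Finset.sum_erase_add _ _ (Finset.mem_univ i)] at this
      linarith
    have h1 : n i ^ 2 * |h i| = |g i i * h i| := by
      rw [abs_mul, hgii, abs_of_nonneg (sq_nonneg (n i))]
    have h2 : |∑ j ∈ Finset.univ.erase i, g i j * h j|
        ≤ ∑ j ∈ S.erase i, |g i j| * |h j| := by
      calc |∑ j ∈ Finset.univ.erase i, g i j * h j|
          ≤ ∑ j ∈ Finset.univ.erase i, |g i j * h j| := Finset.abs_sum_le_sum_abs _ _
        _ = ∑ j ∈ S.erase i, |g i j * h j| := by
            symm
            apply Finset.sum_subset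
            · intro j hj
              simp only [Finset.mem_erase, hSdef, Finset.mem_filter] at hj ⊢
              exact ⟨hj.1, Finset.mem_univ j⟩
            · intro j _ hj
              have : h j = 0 := by
                by_contra hjc
                exact hj (Finset.mem_erase.mpr ⟨by
                  rcases Finset.mem_erase.mp ‹j ∈ Finset.univ.erase i› with ⟨hji, _⟩
                  exact hji, by simp [hSdef, hjc]⟩)
              simp [this]
        _ = ∑ j ∈ S.erase i, |g i j| * |h j| := by
            apply Finset.sum_congr rfl; intro j _; rw [abs_mul]
    have h3 : ∑ j ∈ S.erase i, |g i j| * |h j|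
        ≤ ∑ j ∈ S.erase i, μ * (n i * (n i * |h i|)) := by
      apply Finset.sum_le_sum
      intro j hj
      have hji : j ≠ i := (Finset.mem_erase.mp hj).1
      have hjS : j ∈ S := (Finset.mem_erase.mp hj).2
      have hb := hgbound i j (Ne.symm hji)
      have hd : n j * |h j| ≤ n i * |h i| := hmax j hjS
      have habs : 0 ≤ |h j| := abs_nonneg _
      calc |g i j| * |h j| ≤ (μ * (n i * n j)) * |h j| :=
            mul_le_mul_of_nonneg_right hb habs
        _ = μ * n i * (n j * |h j|) := by ring
        _ ≤ μ * n i * (n i * |h i|) := by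
            apply mul_le_mul_of_nonneg_left hd
            positivity
        _ = μ * (n i * (n i * |h i|)) := by ring
    have h4 : ∑ j ∈ S.erase i, μ * (n i * (n i * |h i|))
        = ((S.erase i).card : ℝ) * (μ * (n i * (n i * |h i|))) := by
      rw [Finset.sum_const, nsmul_eq_mul]
    have hcard : ((S.erase i).card : ℝ) = (S.card : ℝ) - 1 := by
      rw [Finset.card_erase_of_mem hiS]
      have : 1 ≤ S.card := Finset.card_pos.mpr hSne
      push_cast [Nat.cast_sub this]
      ring
    calc n i ^ 2 * |h i| = |g i i * h i| := h1
      _ = |∑ j ∈ Finset.univ.erase i, g i j * h j| := by rw [hsplit, abs_neg]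
      _ ≤ ∑ j ∈ S.erase i, |g i j| * |h j| := h2
      _ ≤ ∑ j ∈ S.erase i, μ * (n i * (n i * |h i|)) := h3
      _ = ((S.card : ℝ) - 1) * (μ * (n i * (n i * |h i|))) := by rw [h4, hcard]
      _ = μ * ((S.card : ℝ) - 1) * (n i * (n i * |h i|)) := by ring
  -- deduce 1 ≤ μ (s - 1)
  have hone : 1 ≤ μ * ((S.card : ℝ) - 1) := by
    have h5 : n i ^ 2 * |h i| = n i * (n i * |h i|) := by ring
    rw [h5] at hkey
    have hpos2 : 0 < n i * (n i * |h i|) := mul_pos (hnpos i) hdipos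
    nlinarith [hkey, hpos2]
  -- card bound
  have hcardle : (S.card : ℝ) ≤ (l0 c : ℝ) + (l0 cbar : ℝ) := by
    have hsub : S ⊆ (Finset.univ.filter (fun j => c j ≠ 0)) ∪
        (Finset.univ.filter (fun j => cbar j ≠ 0)) := by
      intro j hj
      simp only [hSdef, Finset.mem_filter, Finset.mem_union, Finset.mem_univ, true_and] at hj ⊢
      by_contra hc
      push_neg at hc
      apply hj
      simp [hhdef, hc.1, hc.2]
    have := (Finset.card_le_card hsub).trans (Finset.card_union_le _ _)
    rw [l0_eq_card c, l0_eq_card cbar]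
    exact_mod_cast this
  have hμinv : 1 / μ ≤ (S.card : ℝ) - 1 := by
    rw [div_le_iff₀ hμpos]
    linarith [hone]
  have hlc : (l0 c : ℝ) ≤ (l0 cbar : ℝ) := by exact_mod_cast hlt
  linarith [hcbar, hcardle, hμinv, hlc]
end
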